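/- arXiv:1311.3526 — 7 statements merged into one kernel-verified Lean document; each statement's English description precedes it below -/
import Mathlib

section
/- Let c : S^1 → ℝ² be a smooth immersed curve with unit tangent v, unit normal n, arc-length derivative D_s and arc-length measure ds. If a smooth vector field h along c satisfies ⟨D_s h, v⟩ = 0 and ⟨D_s² h, n⟩ = 0 everywhere, then there exist a ∈ ℝ² and b ∈ ℝ such that h = a + b·Jc, where J is rotation by π/2. Conversely every such h satisfies these two conditions. -/
open Real MeasureTheory Set

noncomputable section

/-- Euclidean inner product on ℝ² ≅ ℂ. -/
def dotc (z w : ℂ) : ℝ := z.re * w.re + z.im * w.im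

/-- Speed of a plane curve. -/
def sp (c : ℝ → ℂ) (θ : ℝ) : ℝ := ‖deriv c θ‖

/-- Unit tangent vector. -/
def tv (c : ℝ → ℂ) (θ : ℝ) : ℂ := (sp c θ)⁻¹ • deriv c θ

/-- Unit normal vector (rotation of the tangent by π/2). -/
def nv (c : ℝ → ℂ) (θ : ℝ) : ℂ := Complex.I * tv c θ

/-- Arc-length derivative of a vector field along a curve. -/
def Ds (c h : ℝ → ℂ) (θ : ℝ) : ℂ := (sp c θ)⁻¹ • deriv h θ

/-- Curvature. -/
def curv (c : ℝ → ℂ) (θ : ℝ) : ℝ := dotc (Ds c (tv c) θ) (nv c θ)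

lemma dotc_comm (z w : ℂ) : dotc z w = dotc w z := by simp [dotc]; ring

lemma dotc_smul_left (r : ℝ) (z w : ℂ) : dotc (r • z) w = r * dotc z w := by
  simp [dotc, Complex.smul_re, Complex.smul_im]; ring

lemma dotc_smul_right (r : ℝ) (z w : ℂ) : dotc z (r • w) = r * dotc z w := by
  simp [dotc, Complex.smul_re, Complex.smul_im]; ring

lemma dotc_I_I (z w : ℂ) : dotc (Complex.I * z) (Complex.I * w) = dotc z w := by
  simp [dotc]; ring

lemma dotc_I_self (z : ℂ) : dotc (Complex.I * z) z = 0 := by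
  simp [dotc]; ring

lemma dotc_self (z : ℂ) : dotc z z = ‖z‖^2 := by
  rw [Complex.sq_norm, Complex.normSq_apply]; rfl

lemma hasDerivAt_dotc {F G : ℝ → ℂ} {F' G' : ℂ} {θ : ℝ}
    (hF : HasDerivAt F F' θ) (hG : HasDerivAt G G' θ) :
    HasDerivAt (fun t => dotc (F t) (G t)) (dotc F' (G θ) + dotc (F θ) G') θ := by
  have hFre : HasDerivAt (fun t => (F t).re) F'.re θ :=
    Complex.reCLM.hasFDerivAt.comp_hasDerivAt θ hF
  have hFim : HasDerivAt (fun t => (F t).im) F'.im θ :=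
    Complex.imCLM.hasFDerivAt.comp_hasDerivAt θ hF
  have hGre : HasDerivAt (fun t => (G t).re) G'.re θ :=
    Complex.reCLM.hasFDerivAt.comp_hasDerivAt θ hG
  have hGim : HasDerivAt (fun t => (G t).im) G'.im θ :=
    Complex.imCLM.hasFDerivAt.comp_hasDerivAt θ hG
  have := (hFre.mul hGre).add (hFim.mul hGim)
  exact this.congr_deriv (by simp [dotc]; ring)

lemma decomp {z w : ℂ} (hw : dotc w w = 1) (h : dotc z w = 0) :
    z = dotc z (Complex.I * w) • (Complex.I * w) := by
  have hw' : w.re^2 + w.im^2 = 1 := by simpa [dotc, sq] using hw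
  have h' : z.re * w.re + z.im * w.im = 0 := h
  apply Complex.ext
  · simp [dotc, Complex.smul_re]
    linear_combination w.re * h' - z.re * hw'
  · simp [dotc, Complex.smul_im]
    linear_combination w.im * h' - z.im * hw'

lemma unit_deriv_orth {F : ℝ → ℂ} (hF : ∀ t, DifferentiableAt ℝ F t)
    (hunit : ∀ t, dotc (F t) (F t) = 1) (θ : ℝ) :
    dotc (deriv F θ) (F θ) = 0 := by
  have hd : HasDerivAt F (deriv F θ) θ := (hF θ).hasDerivAt
  have h1 : HasDerivAt (fun t => dotc (F t) (F t))
      (dotc (deriv F θ) (F θ) + dotc (F θ) (deriv F θ)) θ := hasDerivAt_dotc hd hd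
  have h2 : HasDerivAt (fun t => dotc (F t) (F t)) 0 θ := by
    have : (fun t => dotc (F t) (F t)) = fun _ => (1:ℝ) := funext hunit
    rw [this]; exact hasDerivAt_const θ 1
  have := h1.unique h2
  rw [dotc_comm (F θ)] at this
  linarith

/-- the kernel of the flat H²-type metric consists exactly of the
infinitesimal Euclidean motions `h = a + b·Jc`. -/
theorem stmt0 (c h : ℝ → ℂ)
    (hc : ContDiff ℝ (⊤ : ℕ∞) c) (hcper : Function.Periodic c (2 * π))
    (himm : ∀ θ, deriv c θ ≠ 0)
    (hh : ContDiff ℝ (⊤ : ℕ∞) h) (hhper : Function.Periodic h (2 * π)) :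
    ((∀ θ, dotc (Ds c h θ) (tv c θ) = 0) ∧
      (∀ θ, dotc (Ds c (Ds c h) θ) (nv c θ) = 0)) ↔
    ∃ (a : ℂ) (b : ℝ), ∀ θ, h θ = a + b • (Complex.I * c θ) := by
  -- basic smoothness facts
  have hc' : ContDiff ℝ (⊤:ℕ∞) c := hc.of_le (by simp)
  have hh' : ContDiff ℝ (⊤:ℕ∞) h := hh.of_le (by simp)
  have derivc : ContDiff ℝ (⊤:ℕ∞) (deriv c) := (contDiff_infty_iff_deriv.mp hc').2
  have derivh : ContDiff ℝ (⊤:ℕ∞) (deriv h) := (contDiff_infty_iff_deriv.mp hh').2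
  have hs : ∀ θ, sp c θ ≠ 0 := fun θ => by
    simp [sp, himm θ]
  have hspCD : ∀ θ, ContDiffAt ℝ (⊤:ℕ∞) (sp c) θ := fun θ => by
    have : ContDiffAt ℝ (⊤:ℕ∞) (fun t => ‖deriv c t‖) θ :=
      derivc.contDiffAt.norm ℝ (himm θ)
    exact this
  have hspinv : ∀ θ, ContDiffAt ℝ (⊤:ℕ∞) (fun t => (sp c t)⁻¹) θ := fun θ =>
    (hspCD θ).inv (hs θ)
  have tvCD : ∀ θ, ContDiffAt ℝ (⊤:ℕ∞) (tv c) θ := fun θ =>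
    (hspinv θ).smul derivc.contDiffAt
  have tvD : ∀ θ, DifferentiableAt ℝ (tv c) θ := fun θ =>
    (tvCD θ).differentiableAt (by simp)
  have nvD : ∀ θ, DifferentiableAt ℝ (nv c) θ := fun θ => by
    have : DifferentiableAt ℝ (fun t => Complex.I * tv c t) θ :=
      (tvD θ).const_mul Complex.I
    exact this
  have DshD : ∀ θ, DifferentiableAt ℝ (Ds c h) θ := fun θ =>
    (((hspinv θ).smul derivh.contDiffAt).differentiableAt (by simp))
  -- unit norms
  have hvv : ∀ θ, dotc (tv c θ) (tv c θ) = 1 := fun θ => by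
    rw [tv, dotc_smul_left, dotc_smul_right, dotc_self]
    rw [sp, sq]
    have hne : ‖deriv c θ‖ ≠ 0 := by simpa using himm θ
    field_simp
  have hnn : ∀ θ, dotc (nv c θ) (nv c θ) = 1 := fun θ => by
    rw [nv, dotc_I_I]; exact hvv θ
  -- derivative of nv
  have hnvderiv : ∀ θ, HasDerivAt (nv c) (Complex.I * deriv (tv c) θ) θ := fun θ => by
    have := ((tvD θ).hasDerivAt).const_mul Complex.I
    exact this
  have orth_tv : ∀ θ, dotc (deriv (tv c) θ) (tv c θ) = 0 :=
    unit_deriv_orth tvD hvv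
  have orth_nv : ∀ θ, dotc (deriv (nv c) θ) (nv c θ) = 0 :=
    unit_deriv_orth nvD hnn
  constructor
  · rintro ⟨H1, H2⟩
    set β : ℝ → ℝ := fun θ => dotc (Ds c h θ) (nv c θ) with hβdef
    have key : ∀ θ, Ds c h θ = β θ • nv c θ := fun θ =>
      decomp (hvv θ) (H1 θ)
    -- β has zero derivative
    have hβ0 : ∀ θ, HasDerivAt β 0 θ := by
      intro θ
      have hβd : HasDerivAt β
          (dotc (deriv (Ds c h) θ) (nv c θ) + dotc (Ds c h θ) (deriv (nv c) θ)) θ :=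
        hasDerivAt_dotc (DshD θ).hasDerivAt (nvD θ).hasDerivAt
      have e1 : dotc (deriv (Ds c h) θ) (nv c θ) = 0 := by
        have := H2 θ
        rw [Ds, dotc_smul_left] at this
        rcases mul_eq_zero.mp this with h' | h'
        · exact absurd h' (inv_ne_zero (hs θ))
        · exact h'
      have e2 : dotc (Ds c h θ) (deriv (nv c) θ) = 0 := by
        rw [key θ, dotc_smul_left, dotc_comm, orth_nv θ, mul_zero]
      rw [e1, e2] at hβd
      simpa using hβd
    have hβconst : ∀ θ, β θ = β 0 := by
      intro θ
      exact is_const_of_deriv_eq_zero (fun t => (hβ0 t).differentiableAt)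
        (fun t => (hβ0 t).deriv) θ 0
    set b : ℝ := β 0 with hbdef
    -- deriv h θ = b • (I * deriv c θ)
    have hder : ∀ θ, deriv h θ = b • (Complex.I * deriv c θ) := by
      intro θ
      have h1 : deriv h θ = sp c θ • Ds c h θ := by
        rw [Ds, smul_smul, mul_inv_cancel₀ (hs θ), one_smul]
      rw [h1, key θ, hβconst θ, nv, tv]
      rw [smul_comm, smul_smul, Complex.real_smul, Complex.real_smul]
      congr 1
      rw [Complex.real_smul]
      push_cast
      have hsc : (sp c θ : ℂ) ≠ 0 := by exact_mod_cast hs θ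
      field_simp
    refine ⟨h 0 - b • (Complex.I * c 0), b, fun θ => ?_⟩
    have hg : ∀ t, HasDerivAt (fun u => h u - b • (Complex.I * c u)) 0 t := by
      intro t
      have h1 : HasDerivAt h (deriv h t) t :=
        ((hh'.differentiable (by simp)) t).hasDerivAt
      have h2 : HasDerivAt (fun u => b • (Complex.I * c u))
          (b • (Complex.I * deriv c t)) t :=
        (((hc'.differentiable (by simp) t).hasDerivAt).const_mul Complex.I).const_smul b
      have := h1.sub h2
      rw [hder t, sub_self] at this
      exact this
    have := is_const_of_deriv_eq_zero (fun t => (hg t).differentiableAt)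
      (fun t => (hg t).deriv) θ 0
    linear_combination (norm := module) this
  · rintro ⟨a, b, hab⟩
    have hfun : h = fun θ => a + b • (Complex.I * c θ) := funext hab
    have hhd : ∀ θ, HasDerivAt h (b • (Complex.I * deriv c θ)) θ := by
      intro θ
      rw [hfun]
      exact ((((hc'.differentiable (by simp) θ).hasDerivAt).const_mul
        Complex.I).const_smul b).const_add a
    have hderh : ∀ θ, deriv h θ = b • (Complex.I * deriv c θ) := fun θ => (hhd θ).deriv
    have Dsh_eq : ∀ θ, Ds c h θ = b • nv c θ := by
      intro θ
      rw [Ds, hderh, nv, tv]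
      rw [smul_comm]
      congr 1
      rw [mul_smul_comm]
    constructor
    · intro θ
      rw [Dsh_eq θ, dotc_smul_left, nv, dotc_I_self, mul_zero]
    · intro θ
      have hDsfun : Ds c h = fun t => b • nv c t := funext Dsh_eq
      have hDs : HasDerivAt (Ds c h) (b • (Complex.I * deriv (tv c) θ)) θ := by
        rw [hDsfun]
        exact (hnvderiv θ).const_smul b
      rw [Ds, hDs.deriv, dotc_smul_left, dotc_smul_left, nv, dotc_I_I,
        orth_tv θ, mul_zero, mul_zero]
end
end

section
/- Let c : M → ℝ² be a smooth immersion (M = S^1 or [0,2π]) and h a smooth vector field along c. Then the first variation of the turning angle α satisfies dα(c).h = ⟨D_s h, n⟩, i.e., if c̃(t,θ) is a smooth variation with c̃(0,·)=c and ∂_t|₀ c̃ = h, then ∂_t|₀ α(c̃(t,·)) = ⟨D_s h, n⟩. -/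
open Real MeasureTheory Set

noncomputable section

/-- first variation of the turning angle: dα(c).h = ⟨D_s h, n⟩. -/
theorem stmt1 (ct : ℝ → ℝ → ℂ) (α : ℝ → ℝ → ℝ)
    (hc : ContDiff ℝ (⊤ : ℕ∞) (fun p : ℝ × ℝ => ct p.1 p.2))
    (hα : ContDiff ℝ (⊤ : ℕ∞) (fun p : ℝ × ℝ => α p.1 p.2))
    (himm : ∀ t θ, deriv (ct t) θ ≠ 0)
    (hangle : ∀ t θ, deriv (ct t) θ =
      ((sp (ct t) θ : ℝ) : ℂ) * Complex.exp ((α t θ : ℝ) * Complex.I))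
    (θ : ℝ) :
    deriv (fun t => α t θ) 0 =
      dotc (Ds (ct 0) (fun s => deriv (fun t => ct t s) 0) θ) (nv (ct 0) θ) := by
  set F : ℝ × ℝ → ℂ := fun p => ct p.1 p.2 with hFdef
  have hFd : Differentiable ℝ F := hc.differentiable (by simp)
  set G : ℝ × ℝ → (ℝ × ℝ →L[ℝ] ℂ) := fderiv ℝ F with hGdef
  have hGc : ContDiff ℝ (⊤ : ℕ∞) G := hc.fderiv_right (by simp)
  have hGd : Differentiable ℝ G := hGc.differentiable (by simp)
  -- θ-partial as fderiv
  have hline2 : ∀ t θ', HasDerivAt (ct t) (G (t, θ') (0, 1)) θ' := by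
    intro t θ'
    have hγ : HasDerivAt (fun s : ℝ => ((t, s) : ℝ × ℝ)) ((0 : ℝ), (1 : ℝ)) θ' :=
      (hasDerivAt_const θ' t).prodMk (hasDerivAt_id θ')
    exact (hFd (t, θ')).hasFDerivAt.comp_hasDerivAt θ' hγ
  have hg : ∀ t θ', deriv (ct t) θ' = G (t, θ') (0, 1) := fun t θ' => (hline2 t θ').deriv
  -- t-partial as fderiv
  have hline1 : ∀ t' s, HasDerivAt (fun t => ct t s) (G (t', s) (1, 0)) t' := by
    intro t' s
    have hγ : HasDerivAt (fun t : ℝ => ((t, s) : ℝ × ℝ)) ((1 : ℝ), (0 : ℝ)) t' :=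
      (hasDerivAt_id t').prodMk (hasDerivAt_const t' s)
    exact (hFd (t', s)).hasFDerivAt.comp_hasDerivAt t' hγ
  have hh : (fun s => deriv (fun t => ct t s) 0) = fun s => G (0, s) (1, 0) :=
    funext fun s => (hline1 0 s).deriv
  -- derivative in θ of the t-partial
  have hGline2 : HasDerivAt (fun s => G (0, s)) (fderiv ℝ G (0, θ) (0, 1)) θ := by
    have hγ : HasDerivAt (fun s : ℝ => (((0 : ℝ), s) : ℝ × ℝ)) ((0 : ℝ), (1 : ℝ)) θ :=
      (hasDerivAt_const θ (0 : ℝ)).prodMk (hasDerivAt_id θ)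
    exact (hGd (0, θ)).hasFDerivAt.comp_hasDerivAt θ hγ
  have hhd : HasDerivAt (fun s => G (0, s) ((1 : ℝ), (0 : ℝ)))
      (fderiv ℝ G (0, θ) (0, 1) (1, 0)) θ := by
    have := hGline2.clm_apply (hasDerivAt_const θ (((1 : ℝ), (0 : ℝ)) : ℝ × ℝ))
    simpa using this
  -- symmetry of second derivative
  have hsymm : fderiv ℝ G (0, θ) (0, 1) (1, 0) = fderiv ℝ G (0, θ) (1, 0) (0, 1) :=
    second_derivative_symmetric (fun y => (hFd y).hasFDerivAt) ((hGd (0, θ)).hasFDerivAt) _ _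
  set g' : ℂ := fderiv ℝ G (0, θ) (1, 0) (0, 1) with hg'def
  have hderivh : deriv (fun s => deriv (fun t => ct t s) 0) θ = g' := by
    rw [hh, hhd.deriv, hsymm]
  -- derivative in t of the θ-partial
  have hGline1 : HasDerivAt (fun t => G (t, θ)) (fderiv ℝ G (0, θ) (1, 0)) 0 := by
    have hγ : HasDerivAt (fun t : ℝ => ((t, θ) : ℝ × ℝ)) ((1 : ℝ), (0 : ℝ)) 0 :=
      (hasDerivAt_id (0 : ℝ)).prodMk (hasDerivAt_const 0 θ)
    exact (hGd (0, θ)).hasFDerivAt.comp_hasDerivAt 0 hγ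
  have hgd : HasDerivAt (fun t => deriv (ct t) θ) g' 0 := by
    have := hGline1.clm_apply (hasDerivAt_const 0 (((0 : ℝ), (1 : ℝ)) : ℝ × ℝ))
    simp only [map_zero, add_zero] at this
    have h2 : (fun t => deriv (ct t) θ) = fun t => G (t, θ) ((0 : ℝ), (1 : ℝ)) :=
      funext fun t => hg t θ
    rw [h2]
    simpa using this
  -- α derivative in t
  set a' : ℝ := deriv (fun t => α t θ) 0 with ha'def
  have hαd : DifferentiableAt ℝ (fun t => α t θ) 0 := by
    have h1 : Differentiable ℝ (fun p : ℝ × ℝ => α p.1 p.2) := hα.differentiable (by simp)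
    have h2 : Differentiable ℝ (fun t : ℝ => ((t, θ) : ℝ × ℝ)) :=
      differentiable_id.prodMk (differentiable_const θ)
    exact ((h1 (0, θ)).comp 0 (h2 0))
  have had : HasDerivAt (fun t => α t θ) a' 0 := hαd.hasDerivAt
  set a0 : ℝ := α 0 θ with ha0def
  set σ0 : ℝ := sp (ct 0) θ with hσ0def
  have hσpos : 0 < σ0 := by
    rw [hσ0def]; exact (norm_pos_iff.mpr (himm 0 θ))
  -- the function S t = sp (ct t) θ as a complex product
  have hexp : HasDerivAt (fun t : ℝ => Complex.exp (-((α t θ : ℝ) * Complex.I)))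
      (Complex.exp (-((a0 : ℝ) * Complex.I)) * (-((a' : ℂ) * Complex.I))) 0 := by
    have h1 : HasDerivAt (fun t : ℝ => ((α t θ : ℝ) : ℂ)) ((a' : ℝ) : ℂ) 0 := had.ofReal_comp
    exact ((h1.mul_const Complex.I).neg).cexp
  have hS : HasDerivAt (fun t => deriv (ct t) θ * Complex.exp (-((α t θ : ℝ) * Complex.I)))
      (g' * Complex.exp (-((a0 : ℝ) * Complex.I)) +
        deriv (ct 0) θ * (Complex.exp (-((a0 : ℝ) * Complex.I)) * (-((a' : ℂ) * Complex.I)))) 0 :=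
    hgd.mul hexp
  have hSval : ∀ t, deriv (ct t) θ * Complex.exp (-((α t θ : ℝ) * Complex.I)) =
      ((sp (ct t) θ : ℝ) : ℂ) := by
    intro t
    rw [hangle t θ, mul_assoc, ← Complex.exp_add]
    simp
  -- the derivative of S has zero imaginary part
  have him : (g' * Complex.exp (-((a0 : ℝ) * Complex.I)) +
      deriv (ct 0) θ * (Complex.exp (-((a0 : ℝ) * Complex.I)) * (-((a' : ℂ) * Complex.I)))).im
      = 0 := by
    have h1 := Complex.imCLM.hasFDerivAt.comp_hasDerivAt 0 hS
    simp only [Function.comp_def] at h1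
    have h2 : (fun t => Complex.imCLM
        (deriv (ct t) θ * Complex.exp (-((α t θ : ℝ) * Complex.I)))) = fun _ => (0 : ℝ) := by
      funext t
      simp [hSval t]
    rw [h2] at h1
    have h3 := h1.unique (hasDerivAt_const 0 (0 : ℝ))
    simpa using h3
  -- now compute
  rw [Ds, nv, tv, hderivh, hangle 0 θ]
  rw [hangle 0 θ] at him
  rw [show Complex.exp (-((a0 : ℝ) * Complex.I)) = Complex.cos a0 - Complex.sin a0 * Complex.I by
    rw [show -((a0 : ℝ) * Complex.I) = ((-a0 : ℝ) : ℂ) * Complex.I by push_cast; ring,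
      Complex.exp_mul_I]
    push_cast
    rw [Complex.cos_neg, Complex.sin_neg]
    ring] at him
  rw [Complex.exp_mul_I] at him ⊢
  -- reduce to real arithmetic
  rw [dotc]
  simp only [Complex.cos_ofReal_re, Complex.sin_ofReal_re, Complex.add_im, Complex.mul_im,
    Complex.mul_re, Complex.sub_re, Complex.sub_im, Complex.I_re, Complex.I_im,
    Complex.ofReal_re, Complex.ofReal_im, Complex.cos_ofReal_im, Complex.sin_ofReal_im,
    Complex.add_re, Complex.neg_re, Complex.neg_im, Complex.smul_re, Complex.smul_im,
    smul_eq_mul] at him ⊢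
  have hpyth := sin_sq_add_cos_sq a0
  have hσne : σ0 ≠ 0 := ne_of_gt hσpos
  field_simp at him ⊢
  simp only [← ha0def, ← hσ0def] at him ⊢
  linear_combination (-(σ0 * σ0⁻¹ ^ 2)) * him - σ0 ^ 2 * σ0⁻¹ ^ 2 * a' * hpyth -
    a' * (σ0 * σ0⁻¹ + 1) * (mul_inv_cancel₀ hσne)
end
end

section
/- Let c be a smooth immersed plane curve with curvature κ = ⟨D_s v, n⟩ and let h be a smooth vector field along c. Then the first variation of curvature is dκ(c).h = ⟨D_s² h, n⟩ − 2κ⟨D_s h, v⟩. -/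
open Real MeasureTheory Set

noncomputable section

lemma HasDerivAt.cre {f : ℝ → ℂ} {f' : ℂ} {x : ℝ} (hf : HasDerivAt f f' x) :
    HasDerivAt (fun s => (f s).re) f'.re x := by
  exact Complex.reCLM.hasFDerivAt.comp_hasDerivAt x hf

lemma HasDerivAt.cim {f : ℝ → ℂ} {f' : ℂ} {x : ℝ} (hf : HasDerivAt f f' x) :
    HasDerivAt (fun s => (f s).im) f'.im x := by
  exact Complex.imCLM.hasFDerivAt.comp_hasDerivAt x hf

lemma cabs_eq (z : ℂ) : ‖z‖ = Real.sqrt (z.re ^ 2 + z.im ^ 2) := by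
  rw [Complex.norm_def, Complex.normSq_apply]; ring_nf

lemma hasDerivAt_cabs {f : ℝ → ℂ} {f' : ℂ} {x : ℝ} (hf : HasDerivAt f f' x) (h0 : f x ≠ 0) :
    HasDerivAt (fun s => ‖f s‖) (dotc (f x) f' / ‖f x‖) x := by
  have hq : HasDerivAt (fun s => (f s).re ^ 2 + (f s).im ^ 2)
      (2 * (f x).re ^ 1 * f'.re + 2 * (f x).im ^ 1 * f'.im) x := by
    exact (hf.cre.pow 2).add (hf.cim.pow 2)
  have hqne : (f x).re ^ 2 + (f x).im ^ 2 ≠ 0 := by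
    have := Complex.normSq_pos.mpr h0
    rw [Complex.normSq_apply] at this
    nlinarith
  have hs := hq.sqrt hqne
  have habs : ∀ z : ℂ, ‖z‖ = Real.sqrt (z.re ^ 2 + z.im ^ 2) := by
    intro z; rw [Complex.norm_def, Complex.normSq_apply]; ring_nf
  have hsqne : Real.sqrt ((f x).re ^ 2 + (f x).im ^ 2) ≠ 0 := by
    rw [← habs]; exact norm_ne_zero_iff.mpr h0
  convert hs using 1
  · funext s; rw [habs]
  · rw [habs, dotc]; field_simp

/-- Derivative of `s ↦ (sp c s)⁻¹ • deriv g s` at θ. -/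

lemma key_deriv {c g : ℝ → ℂ} {θ : ℝ} {B G : ℂ}
    (hA : HasDerivAt (deriv c) B θ) (hG : HasDerivAt (deriv g) G θ)
    (h0 : deriv c θ ≠ 0) :
    HasDerivAt (fun s => (sp c s)⁻¹ • deriv g s)
      ((-(dotc (deriv c θ) B) / (sp c θ) ^ 3) • deriv g θ + (sp c θ)⁻¹ • G) θ := by
  have habs : HasDerivAt (sp c) (dotc (deriv c θ) B / sp c θ) θ := hasDerivAt_cabs hA h0
  have hspne : sp c θ ≠ 0 := norm_ne_zero_iff.mpr h0
  have hinv := habs.inv hspne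
  have := hinv.smul hG
  have hsc : -(dotc (deriv c θ) B / sp c θ) / sp c θ ^ 2 = -dotc (deriv c θ) B / sp c θ ^ 3 := by
    field_simp
  rw [hsc] at this
  rw [add_comm] at this
  exact this

lemma curv_eq {c : ℝ → ℂ} {θ : ℝ} {B : ℂ} (hA : HasDerivAt (deriv c) B θ)
    (h0 : deriv c θ ≠ 0) :
    curv c θ = ((deriv c θ).re * B.im - (deriv c θ).im * B.re) / (sp c θ) ^ 3 := by
  have hspne : sp c θ ≠ 0 := norm_ne_zero_iff.mpr h0
  have hd : deriv (tv c) θ =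
      (-(dotc (deriv c θ) B) / (sp c θ) ^ 3) • deriv c θ + (sp c θ)⁻¹ • B := by
    have := key_deriv hA hA h0
    exact HasDerivAt.deriv (by exact this)
  simp only [curv, Ds, nv, tv, hd, dotc]
  simp only [Complex.add_re, Complex.add_im, Complex.smul_re, Complex.smul_im,
    Complex.mul_re, Complex.mul_im, Complex.I_re, Complex.I_im]
  field_simp
  have e : sp c θ ^ 3 * (sp c θ)⁻¹ ^ 3 = 1 := by rw [← mul_pow, mul_inv_cancel₀ hspne, one_pow]
  linear_combination ((deriv c θ).re * B.im - B.re * (deriv c θ).im) * e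

/-- first variation of the curvature:
dκ(c).h = ⟨D_s² h, n⟩ − 2κ⟨D_s h, v⟩. -/
theorem stmt2 (c h : ℝ → ℂ) (hc : ContDiff ℝ (⊤ : ℕ∞) c) (hh : ContDiff ℝ (⊤ : ℕ∞) h)
    (himm : ∀ θ, deriv c θ ≠ 0) (θ : ℝ) :
    deriv (fun t : ℝ => curv (fun s => c s + t • h s) θ) 0 =
      dotc (Ds c (Ds c h) θ) (nv c θ) - 2 * curv c θ * dotc (Ds c h θ) (tv c θ) := by
  have hdc : Differentiable ℝ c := hc.differentiable (by simp)
  have hdh : Differentiable ℝ h := hh.differentiable (by simp)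
  have hc' : ContDiff ℝ (↑(⊤:ℕ∞)) (deriv c) := (contDiff_infty_iff_deriv.mp (hc.of_le (by simp))).2
  have hh' : ContDiff ℝ (↑(⊤:ℕ∞)) (deriv h) := (contDiff_infty_iff_deriv.mp (hh.of_le (by simp))).2
  set A := deriv c θ with hA
  set B := deriv (deriv c) θ with hBdef
  set H := deriv h θ with hHdef
  set K := deriv (deriv h) θ with hKdef
  have hB : HasDerivAt (deriv c) B θ := (hc'.differentiable (by norm_num) θ).hasDerivAt
  have hK : HasDerivAt (deriv h) K θ := (hh'.differentiable (by norm_num) θ).hasDerivAt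
  have h0 : A ≠ 0 := himm θ
  -- derivative of perturbed curve
  have hctd : ∀ t : ℝ, deriv (fun s => c s + t • h s) = fun s => deriv c s + t • deriv h s := by
    intro t; funext s
    exact (((hdc s).hasDerivAt).add (((hdh s).hasDerivAt).const_smul t)).deriv
  have hct2 : ∀ t : ℝ, HasDerivAt (deriv (fun s => c s + t • h s)) (B + t • K) θ := by
    intro t; rw [hctd t]; exact hB.add (hK.const_smul t)
  -- eventual formula
  have hev : ∀ᶠ t : ℝ in nhds 0, A + t • H ≠ 0 := by
    have hcont : ContinuousAt (fun t : ℝ => A + t • H) 0 :=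
      (continuous_const.add (continuous_id.smul continuous_const)).continuousAt
    have := hcont.eventually_ne (by simpa using h0)
    exact this
  have heq : (fun t : ℝ => curv (fun s => c s + t • h s) θ) =ᶠ[nhds 0]
      fun t : ℝ => ((A + t • H).re * (B + t • K).im - (A + t • H).im * (B + t • K).re)
        / ‖A + t • H‖ ^ 3 := by
    filter_upwards [hev] with t ht
    have h0t : deriv (fun s => c s + t • h s) θ ≠ 0 := by
      rw [hctd t]; exact ht
    have := curv_eq (c := fun s => c s + t • h s) (hct2 t) h0t
    rw [this]
    have e1 : deriv (fun s => c s + t • h s) θ = A + t • H := by rw [hctd t]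
    rw [sp, e1]
  rw [heq.deriv_eq]
  -- compute the t-derivative
  have hN : HasDerivAt (fun t : ℝ => (A + t • H).re * (B + t • K).im - (A + t • H).im * (B + t • K).re)
      (H.re * B.im + A.re * K.im - (H.im * B.re + A.im * K.re)) 0 := by
    have l1 : HasDerivAt (fun t : ℝ => (A + t • H).re) H.re 0 := by
      simp only [Complex.add_re, Complex.smul_re]
      simpa using ((hasDerivAt_id (0:ℝ)).mul_const H.re).const_add A.re
    have l2 : HasDerivAt (fun t : ℝ => (A + t • H).im) H.im 0 := by
      simp only [Complex.add_im, Complex.smul_im]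
      simpa using ((hasDerivAt_id (0:ℝ)).mul_const H.im).const_add A.im
    have l3 : HasDerivAt (fun t : ℝ => (B + t • K).re) K.re 0 := by
      simp only [Complex.add_re, Complex.smul_re]
      simpa using ((hasDerivAt_id (0:ℝ)).mul_const K.re).const_add B.re
    have l4 : HasDerivAt (fun t : ℝ => (B + t • K).im) K.im 0 := by
      simp only [Complex.add_im, Complex.smul_im]
      simpa using ((hasDerivAt_id (0:ℝ)).mul_const K.im).const_add B.im
    have := (l1.mul l4).sub (l2.mul l3)
    exact this.congr_deriv (by simp)
  have hq : HasDerivAt (fun t : ℝ => (A + t • H).re ^ 2 + (A + t • H).im ^ 2)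
      (2 * A.re * H.re + 2 * A.im * H.im) 0 := by
    have l1 : HasDerivAt (fun t : ℝ => (A + t • H).re) H.re 0 := by
      simp only [Complex.add_re, Complex.smul_re]
      simpa using ((hasDerivAt_id (0:ℝ)).mul_const H.re).const_add A.re
    have l2 : HasDerivAt (fun t : ℝ => (A + t • H).im) H.im 0 := by
      simp only [Complex.add_im, Complex.smul_im]
      simpa using ((hasDerivAt_id (0:ℝ)).mul_const H.im).const_add A.im
    have h5 := (l1.pow 2).add (l2.pow 2)
    exact h5.congr_deriv (by norm_num)
  have hA0 : A + (0:ℝ) • H = A := by simp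
  have hrqpos : 0 < A.re ^ 2 + A.im ^ 2 := by
    have := Complex.normSq_pos.mpr h0
    rw [Complex.normSq_apply] at this
    nlinarith
  set r := Real.sqrt (A.re ^ 2 + A.im ^ 2) with hrdef
  have hrpos : 0 < r := Real.sqrt_pos.mpr hrqpos
  have hr2 : r ^ 2 = A.re ^ 2 + A.im ^ 2 := Real.sq_sqrt hrqpos.le
  have hre : sp c θ = r := by
    rw [sp, cabs_eq]
  have hs : HasDerivAt (fun t : ℝ => Real.sqrt ((A + t • H).re ^ 2 + (A + t • H).im ^ 2))
      ((2 * A.re * H.re + 2 * A.im * H.im) / (2 * r)) 0 := by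
    have h6 := hq.sqrt (by simp only [hA0]; exact hrqpos.ne')
    convert h6 using 2 <;> simp [hA0, hrdef]
  have hs3 := hs.pow 3
  have hsne : Real.sqrt ((A + (0:ℝ) • H).re ^ 2 + (A + (0:ℝ) • H).im ^ 2) ≠ 0 := by
    rw [hA0]; exact hrpos.ne'
  have hD := hN.div hs3 (by simpa using pow_ne_zero 3 hsne)
  have hfg : (fun t : ℝ => ((A + t • H).re * (B + t • K).im - (A + t • H).im * (B + t • K).re)
        / ‖A + t • H‖ ^ 3)
      = fun t : ℝ => ((A + t • H).re * (B + t • K).im - (A + t • H).im * (B + t • K).re)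
        / (Real.sqrt ((A + t • H).re ^ 2 + (A + t • H).im ^ 2)) ^ 3 := by
    funext t; rw [cabs_eq]
  rw [hfg]; erw [hD.deriv]
  have hdsh : deriv (Ds c h) θ = (-(dotc A B) / (sp c θ) ^ 3) • H + (sp c θ)⁻¹ • K :=
    HasDerivAt.deriv (key_deriv hB hK h0)
  rw [curv_eq hB h0]
  simp only [Ds, nv, tv, hdsh, dotc, hre, hA0, Complex.add_re, Complex.add_im,
    Complex.smul_re, Complex.smul_im, Complex.mul_re, Complex.mul_im,
    Complex.I_re, Complex.I_im]
  rw [← hrdef]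
  rw [← hA]
  simp only [smul_eq_mul, zero_mul, one_mul, zero_smul, add_zero, zero_sub, sub_zero, zero_add]
  norm_num
  field_simp
  linear_combination r ^ 6 * (H.re * B.im - H.im * B.re) * hr2
end
end

section
/- Let c be a smooth immersed plane curve and h a vector field along c. Then the first variation of √|c'| is d(√|c'|).h = (1/2)⟨D_s h, v⟩√|c'|, and for strictly convex c the first variation of κ^{1/4}√|c'| is (1/4)κ^{-3/4}⟨D_s² h, n⟩√|c'|. Consequently the pullback of the flat L² inner product under the map c ↦ (2√|c'|, 4 κ^{1/4}√|c'|) satisfies |dR(c).h|² = (⟨D_s h, v⟩² + κ^{-3/2}⟨D_s² h, n⟩²)·|c'| pointwise. -/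
open Real MeasureTheory Set

noncomputable section

lemma sp_eq_sqrt (γ : ℝ → ℂ) (s : ℝ) :
    sp γ s = Real.sqrt ((deriv γ s).re ^ 2 + (deriv γ s).im ^ 2) := by
  rw [sp, Complex.norm_def, Complex.normSq_apply]; ring_nf

lemma sp_pos {γ : ℝ → ℂ} {s : ℝ} (h0 : deriv γ s ≠ 0) : 0 < sp γ s := by
  simpa [sp] using (norm_pos_iff.mpr h0)

lemma re_hasDerivAt {f : ℝ → ℂ} {A : ℂ} {θ : ℝ} (hA : HasDerivAt f A θ) :
    HasDerivAt (fun s => (f s).re) A.re θ := by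
  exact (Complex.reCLM.hasFDerivAt.comp_hasDerivAt θ hA :)

lemma im_hasDerivAt {f : ℝ → ℂ} {A : ℂ} {θ : ℝ} (hA : HasDerivAt f A θ) :
    HasDerivAt (fun s => (f s).im) A.im θ := by
  exact (Complex.imCLM.hasFDerivAt.comp_hasDerivAt θ hA :)

lemma sp_hasDerivAt {γ : ℝ → ℂ} {A : ℂ} {θ : ℝ} (hA : HasDerivAt (deriv γ) A θ)
    (h0 : deriv γ θ ≠ 0) :
    HasDerivAt (sp γ) (dotc A (deriv γ θ) / sp γ θ) θ := by
  have hN : HasDerivAt (fun s => (deriv γ s).re ^ 2 + (deriv γ s).im ^ 2)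
      (2 * ((deriv γ θ).re * A.re + (deriv γ θ).im * A.im)) θ := by
    have := ((re_hasDerivAt hA).pow 2).add ((im_hasDerivAt hA).pow 2)
    refine this.congr_deriv ?_
    push_cast
    ring
  have hNne : (deriv γ θ).re ^ 2 + (deriv γ θ).im ^ 2 ≠ 0 := by
    have := sp_pos h0
    rw [sp_eq_sqrt] at this
    intro hzero
    rw [hzero] at this
    simp at this
  have hsq := (Real.hasDerivAt_sqrt hNne).comp θ hN
  have hfun : sp γ = fun s => Real.sqrt ((deriv γ s).re ^ 2 + (deriv γ s).im ^ 2) :=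
    funext fun s => sp_eq_sqrt γ s
  rw [hfun]
  refine hsq.congr_deriv ?_
  simp only
  have hs : Real.sqrt ((deriv γ θ).re ^ 2 + (deriv γ θ).im ^ 2) ≠ 0 := by
    rw [← sp_eq_sqrt]; exact (sp_pos h0).ne'
  field_simp [dotc]
  rw [dotc]; ring

lemma curv_formula {γ : ℝ → ℂ} {A : ℂ} {θ : ℝ} (hA : HasDerivAt (deriv γ) A θ)
    (h0 : deriv γ θ ≠ 0) :
    curv γ θ = ((deriv γ θ).re * A.im - (deriv γ θ).im * A.re) / (sp γ θ) ^ 3 := by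
  have hsp := sp_hasDerivAt hA h0
  have hspne := (sp_pos h0).ne'
  have hinv := hsp.inv hspne
  have htv : HasDerivAt (tv γ)
      ((sp γ θ)⁻¹ • A + (-(dotc A (deriv γ θ) / sp γ θ) / sp γ θ ^ 2) • deriv γ θ) θ := by
    have : tv γ = fun s => (sp γ s)⁻¹ • deriv γ s := rfl
    rw [this]
    exact hinv.smul hA
  rw [curv, Ds, nv, tv, htv.deriv]
  simp only [dotc, Complex.add_re, Complex.add_im, Complex.smul_re, Complex.smul_im,
    Complex.mul_re, Complex.mul_im, Complex.I_re, Complex.I_im, smul_eq_mul]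
  field_simp
  ring

lemma pow_rpow_eq {x : ℝ} (hx : 0 < x) (n : ℕ) (r : ℝ) (m : ℕ) (h : (n:ℝ) * r = -(m:ℝ)) :
    (x ^ n) ^ r = (x ^ m)⁻¹ := by
  rw [← Real.rpow_natCast x n, ← Real.rpow_mul hx.le, h, ← Real.rpow_natCast x m,
    ← Real.rpow_neg hx.le]

lemma alg1 {p q : ℝ} (hp : 0 < p) (hq : 0 < q) :
    (p / Real.sqrt q ^ 3) ^ ((1:ℝ)/4) * Real.sqrt (Real.sqrt q)
      = p ^ ((1:ℝ)/4) * q ^ (-(1:ℝ)/8) := by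
  rw [Real.sqrt_eq_rpow, Real.sqrt_eq_rpow, ← Real.rpow_natCast (q ^ ((1:ℝ)/2)) 3,
    ← Real.rpow_mul hq.le, ← Real.rpow_mul hq.le,
    Real.div_rpow hp.le (Real.rpow_nonneg hq.le _), ← Real.rpow_mul hq.le,
    div_mul_eq_mul_div, div_eq_iff (by positivity), mul_assoc, mul_assoc,
    ← Real.rpow_add hq]
  norm_num


set_option maxHeartbeats 2000000 in
/-- first variations of √|c'| and κ^{1/4}√|c'|, and the pointwise
isometry property of the R-transform R(c) = √|c'|·(2, 4κ^{1/4}). -/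
theorem stmt3 (c h : ℝ → ℂ) (hc : ContDiff ℝ (⊤ : ℕ∞) c) (hh : ContDiff ℝ (⊤ : ℕ∞) h)
    (himm : ∀ θ, deriv c θ ≠ 0) (hconv : ∀ θ, 0 < curv c θ) (θ : ℝ) :
    deriv (fun t : ℝ => Real.sqrt (sp (fun s => c s + t • h s) θ)) 0
        = (1 / 2) * dotc (Ds c h θ) (tv c θ) * Real.sqrt (sp c θ) ∧
    deriv (fun t : ℝ => (curv (fun s => c s + t • h s) θ) ^ ((1 : ℝ) / 4) *
        Real.sqrt (sp (fun s => c s + t • h s) θ)) 0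
        = (1 / 4) * (curv c θ) ^ (-(3 : ℝ) / 4) *
            dotc (Ds c (Ds c h) θ) (nv c θ) * Real.sqrt (sp c θ) ∧
    (deriv (fun t : ℝ => 2 * Real.sqrt (sp (fun s => c s + t • h s) θ)) 0) ^ 2 +
      (deriv (fun t : ℝ => 4 * (curv (fun s => c s + t • h s) θ) ^ ((1 : ℝ) / 4) *
          Real.sqrt (sp (fun s => c s + t • h s) θ)) 0) ^ 2
        = (dotc (Ds c h θ) (tv c θ) ^ 2 +
            (curv c θ) ^ (-(3 : ℝ) / 2) * dotc (Ds c (Ds c h) θ) (nv c θ) ^ 2) * sp c θ := by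
  have hcd : Differentiable ℝ c := hc.differentiable (by simp)
  have hhd : Differentiable ℝ h := hh.differentiable (by simp)
  have hcd2 : Differentiable ℝ (deriv c) :=
    ((contDiff_infty_iff_deriv.1 (hc.of_le (by simp))).2).differentiable (by simp)
  have hhd2 : Differentiable ℝ (deriv h) :=
    ((contDiff_infty_iff_deriv.1 (hh.of_le (by simp))).2).differentiable (by simp)
  set a := deriv c θ with ha_def
  set b := deriv h θ with hb_def
  set A := deriv (deriv c) θ with hA_def
  set B := deriv (deriv h) θ with hB_def
  have hA : HasDerivAt (deriv c) A θ := (hcd2 θ).hasDerivAt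
  have hB : HasDerivAt (deriv h) B θ := (hhd2 θ).hasDerivAt
  have ha0 : a ≠ 0 := himm θ
  set Q : ℝ → ℝ := fun t => (a.re + t * b.re) ^ 2 + (a.im + t * b.im) ^ 2 with hQ_def
  set P : ℝ → ℝ := fun t =>
    (a.re + t * b.re) * (A.im + t * B.im) - (a.im + t * b.im) * (A.re + t * B.re) with hP_def
  -- derivative of the deformed curve
  have hct : ∀ t : ℝ, deriv (fun s => c s + t • h s) = fun s => deriv c s + t • deriv h s := by
    intro t; funext s
    rw [deriv_fun_add (g := fun y => t • h y) (hcd s) ((hhd s).const_smul t), deriv_fun_const_smul t (hhd s)]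
  have hQnorm : ∀ t : ℝ, Q t = Complex.normSq (a + t • b) := by
    intro t
    simp only [hQ_def, Complex.normSq_apply, Complex.add_re, Complex.add_im,
      Complex.smul_re, Complex.smul_im, smul_eq_mul]
    ring
  have hsp_t : ∀ t : ℝ, sp (fun s => c s + t • h s) θ = Real.sqrt (Q t) := by
    intro t
    rw [sp, hct t]
    simp only
    rw [Complex.norm_def]
    congr 1
    rw [hQnorm t]
  have hQ00 : Q 0 = a.re ^ 2 + a.im ^ 2 := by simp [hQ_def]
  have hP00 : P 0 = a.re * A.im - a.im * A.re := by simp [hP_def]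
  have hQ0pos : 0 < Q 0 := by rw [hQnorm 0]; simpa using Complex.normSq_pos.2 ha0
  have hcurvc : curv c θ = P 0 / (sp c θ) ^ 3 := by rw [curv_formula hA ha0, hP00]
  have hspc_pos : 0 < sp c θ := sp_pos ha0
  have hP0pos : 0 < P 0 := by
    have h1 := hconv θ
    rw [hcurvc] at h1
    have h2 := mul_pos h1 (pow_pos hspc_pos 3)
    rwa [div_mul_cancel₀ _ (pow_pos hspc_pos 3).ne'] at h2
  set u := (Q 0) ^ ((1:ℝ)/8) with hu_def
  set w := (P 0) ^ ((1:ℝ)/4) with hw_def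
  have hu : 0 < u := Real.rpow_pos_of_pos hQ0pos _
  have hw : 0 < w := Real.rpow_pos_of_pos hP0pos _
  have hu8 : u ^ 8 = Q 0 := by
    rw [hu_def, ← Real.rpow_natCast (Q 0 ^ ((1:ℝ)/8)) 8, ← Real.rpow_mul hQ0pos.le]
    norm_num
  have hw4 : w ^ 4 = P 0 := by
    rw [hw_def, ← Real.rpow_natCast (P 0 ^ ((1:ℝ)/4)) 4, ← Real.rpow_mul hP0pos.le]
    norm_num
  have hsqQ0 : Real.sqrt (Q 0) = u ^ 4 := by
    rw [← hu8, show u ^ 8 = (u ^ 4) ^ 2 by ring, Real.sqrt_sq (by positivity)]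
  have hspu : sp c θ = u ^ 4 := by
    rw [sp_eq_sqrt, ← hsqQ0, hQ00]
  have hsspu : Real.sqrt (sp c θ) = u ^ 2 := by
    rw [hspu, show u ^ 4 = (u ^ 2) ^ 2 by ring, Real.sqrt_sq (by positivity)]
  have hssqQ0 : Real.sqrt (Real.sqrt (Q 0)) = u ^ 2 := by
    rw [hsqQ0, show u ^ 4 = (u ^ 2) ^ 2 by ring, Real.sqrt_sq (by positivity)]
  -- dotc computations
  have hdot1 : dotc (Ds c h θ) (tv c θ) = (a.re * b.re + a.im * b.im) / u ^ 8 := by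
    rw [Ds, tv, hspu, ← hb_def, ← ha_def]
    simp only [dotc, Complex.smul_re, Complex.smul_im, smul_eq_mul]
    field_simp
  have hder2 : HasDerivAt (Ds c h)
      ((sp c θ)⁻¹ • B + (-(dotc A a / sp c θ) / sp c θ ^ 2) • b) θ := by
    have heq : Ds c h = fun s => (sp c s)⁻¹ • deriv h s := rfl
    rw [heq]
    exact ((sp_hasDerivAt hA ha0).inv hspc_pos.ne').smul hB
  have hdot2 : dotc (Ds c (Ds c h) θ) (nv c θ)
      = (a.re * B.im - a.im * B.re) / u ^ 12
        - (a.re * A.re + a.im * A.im) * (a.re * b.im - a.im * b.re) / u ^ 20 := by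
    rw [Ds, hder2.deriv, nv, tv, hspu, ← ha_def]
    simp only [dotc, Complex.add_re, Complex.add_im, Complex.smul_re, Complex.smul_im,
      Complex.mul_re, Complex.mul_im, Complex.I_re, Complex.I_im, smul_eq_mul, hspu]
    field_simp
    ring
  -- rpow facts
  have F1 : P 0 ^ ((1:ℝ)/4 - 1) = (w ^ 3)⁻¹ := by
    rw [← hw4, pow_rpow_eq hw 4 _ 3 (by norm_num)]
  have F2 : Q 0 ^ (-(1:ℝ)/8 - 1) = (u ^ 9)⁻¹ := by
    rw [← hu8, pow_rpow_eq hu 8 _ 9 (by norm_num)]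
  have F3 : Q 0 ^ (-(1:ℝ)/8) = (u ^ 1)⁻¹ := by
    rw [← hu8, pow_rpow_eq hu 8 _ 1 (by norm_num)]
  have F5 : curv c θ ^ (-(3:ℝ)/4) = u ^ 9 / w ^ 3 := by
    rw [hcurvc, hspu, ← hw4, show ((u:ℝ) ^ 4) ^ 3 = u ^ 12 by ring,
      Real.div_rpow (by positivity) (by positivity),
      pow_rpow_eq hw 4 _ 3 (by norm_num), pow_rpow_eq hu 12 _ 9 (by norm_num)]
    field_simp
  have F6 : curv c θ ^ (-(3:ℝ)/2) = u ^ 18 / w ^ 6 := by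
    rw [hcurvc, hspu, ← hw4, show ((u:ℝ) ^ 4) ^ 3 = u ^ 12 by ring,
      Real.div_rpow (by positivity) (by positivity),
      pow_rpow_eq hw 4 _ 6 (by norm_num), pow_rpow_eq hu 12 _ 18 (by norm_num)]
    field_simp
  -- t-derivatives of P and Q
  have hb1 : HasDerivAt (fun t : ℝ => a.re + t * b.re) b.re 0 := by
    simpa using ((hasDerivAt_id (0:ℝ)).mul_const b.re).const_add a.re
  have hb2 : HasDerivAt (fun t : ℝ => a.im + t * b.im) b.im 0 := by
    simpa using ((hasDerivAt_id (0:ℝ)).mul_const b.im).const_add a.im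
  have hb3 : HasDerivAt (fun t : ℝ => A.im + t * B.im) B.im 0 := by
    simpa using ((hasDerivAt_id (0:ℝ)).mul_const B.im).const_add A.im
  have hb4 : HasDerivAt (fun t : ℝ => A.re + t * B.re) B.re 0 := by
    simpa using ((hasDerivAt_id (0:ℝ)).mul_const B.re).const_add A.re
  have hQd : HasDerivAt Q (2 * (a.re * b.re + a.im * b.im)) 0 := by
    rw [hQ_def]
    have := (hb1.pow 2).add (hb2.pow 2)
    refine this.congr_deriv ?_
    norm_num
    ring
  have hPd : HasDerivAt P ((b.re * A.im + a.re * B.im) - (b.im * A.re + a.im * B.re)) 0 := by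
    rw [hP_def]
    have := (hb1.mul hb3).sub (hb2.mul hb4)
    refine this.congr_deriv ?_
    norm_num
  have hsq1 : HasDerivAt (fun t => Real.sqrt (Q t))
      (1 / (2 * Real.sqrt (Q 0)) * (2 * (a.re * b.re + a.im * b.im))) 0 :=
    (Real.hasDerivAt_sqrt hQ0pos.ne').comp 0 hQd
  have hsqQ0ne : Real.sqrt (Q 0) ≠ 0 := by rw [hsqQ0]; positivity
  have hsq2 : HasDerivAt (fun t => Real.sqrt (Real.sqrt (Q t)))
      (1 / (2 * Real.sqrt (Real.sqrt (Q 0))) *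
        (1 / (2 * Real.sqrt (Q 0)) * (2 * (a.re * b.re + a.im * b.im)))) 0 :=
    (Real.hasDerivAt_sqrt hsqQ0ne).comp 0 hsq1
  have hfun1 : (fun t : ℝ => Real.sqrt (sp (fun s => c s + t • h s) θ))
      = fun t => Real.sqrt (Real.sqrt (Q t)) := funext fun t => by rw [hsp_t t]
  -- eventual facts
  have hev1 : ∀ᶠ t in nhds (0:ℝ), a + t • b ≠ 0 := by
    have hcont : ContinuousAt (fun t : ℝ => a + t • b) 0 :=
      (continuous_const.add (continuous_id.smul continuous_const)).continuousAt
    exact hcont.eventually_ne (by simpa using ha0)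
  have hev2 : ∀ᶠ t in nhds (0:ℝ), 0 < P t :=
    hPd.continuousAt.eventually (eventually_gt_nhds hP0pos)
  have hev3 : (fun t : ℝ => (curv (fun s => c s + t • h s) θ) ^ ((1 : ℝ) / 4) *
      Real.sqrt (sp (fun s => c s + t • h s) θ))
      =ᶠ[nhds (0:ℝ)] fun t => P t ^ ((1:ℝ)/4) * Q t ^ (-(1:ℝ)/8) := by
    filter_upwards [hev1, hev2] with t ht1 ht2
    have hQtpos : 0 < Q t := by rw [hQnorm t]; exact Complex.normSq_pos.2 ht1
    have hctderiv := hct t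
    have hAct : HasDerivAt (deriv (fun s => c s + t • h s)) (A + t • B) θ := by
      rw [hctderiv]; exact hA.add (hB.const_smul t)
    have hne : deriv (fun s => c s + t • h s) θ ≠ 0 := by
      rw [hctderiv]; simpa using ht1
    have hre : deriv (fun s => c s + t • h s) θ = a + t • b := by rw [hctderiv]
    have hnum : (a + t • b).re * (A + t • B).im - (a + t • b).im * (A + t • B).re = P t := by
      simp only [hP_def, Complex.add_re, Complex.add_im, Complex.smul_re, Complex.smul_im,
        smul_eq_mul]
    rw [curv_formula hAct hne, hre, hnum, hsp_t t]
    exact alg1 ht2 hQtpos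
  have hg : HasDerivAt (fun t => P t ^ ((1:ℝ)/4) * Q t ^ (-(1:ℝ)/8))
      ((((b.re * A.im + a.re * B.im) - (b.im * A.re + a.im * B.re)) * ((1:ℝ)/4) *
          P 0 ^ ((1:ℝ)/4 - 1)) * Q 0 ^ (-(1:ℝ)/8)
        + P 0 ^ ((1:ℝ)/4) *
          (2 * (a.re * b.re + a.im * b.im) * (-(1:ℝ)/8) * Q 0 ^ (-(1:ℝ)/8 - 1))) 0 :=
    (hPd.rpow_const (Or.inl hP0pos.ne')).mul (hQd.rpow_const (Or.inl hQ0pos.ne'))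
  -- key identity
  have hkey : (b.re * A.im - b.im * A.re) * u ^ 8
      = (a.re * b.re + a.im * b.im) * w ^ 4
        - (a.re * A.re + a.im * A.im) * (a.re * b.im - a.im * b.re) := by
    rw [hu8, hw4, hQ00, hP00]; ring
  -- goal 1
  have G1 : deriv (fun t : ℝ => Real.sqrt (sp (fun s => c s + t • h s) θ)) 0
      = (1 / 2) * dotc (Ds c h θ) (tv c θ) * Real.sqrt (sp c θ) := by
    rw [hfun1, hsq2.deriv, hdot1, hsspu, hssqQ0, hsqQ0]
    field_simp
  -- goal 2
  have hdg : deriv (fun t : ℝ => (curv (fun s => c s + t • h s) θ) ^ ((1 : ℝ) / 4) *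
      Real.sqrt (sp (fun s => c s + t • h s) θ)) 0
      = ((b.re * A.im - b.im * A.re + (a.re * B.im - a.im * B.re)) * u ^ 8
          - (a.re * b.re + a.im * b.im) * w ^ 4) / (4 * w ^ 3 * u ^ 9) := by
    rw [hev3.deriv_eq, hg.deriv, F1, F2, F3, pow_one]
    field_simp
    ring
  have hdg2 : deriv (fun t : ℝ => (curv (fun s => c s + t • h s) θ) ^ ((1 : ℝ) / 4) *
      Real.sqrt (sp (fun s => c s + t • h s) θ)) 0
      = ((a.re * B.im - a.im * B.re) * u ^ 8
          - (a.re * A.re + a.im * A.im) * (a.re * b.im - a.im * b.re)) / (4 * w ^ 3 * u ^ 9) := by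
    rw [hdg]
    congr 1
    linear_combination hkey
  have G2 : deriv (fun t : ℝ => (curv (fun s => c s + t • h s) θ) ^ ((1 : ℝ) / 4) *
      Real.sqrt (sp (fun s => c s + t • h s) θ)) 0
      = (1 / 4) * (curv c θ) ^ (-(3 : ℝ) / 4) *
          dotc (Ds c (Ds c h) θ) (nv c θ) * Real.sqrt (sp c θ) := by
    rw [hdg2, F5, hdot2, hsspu]
    field_simp
  refine ⟨G1, G2, ?_⟩
  -- goal 3
  have hfun3 : (fun t : ℝ => 2 * Real.sqrt (sp (fun s => c s + t • h s) θ))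
      = fun t => 2 * Real.sqrt (Real.sqrt (Q t)) := funext fun t => by rw [hsp_t t]
  have G3a : deriv (fun t : ℝ => 2 * Real.sqrt (sp (fun s => c s + t • h s) θ)) 0
      = 2 * (1 / (2 * Real.sqrt (Real.sqrt (Q 0))) *
        (1 / (2 * Real.sqrt (Q 0)) * (2 * (a.re * b.re + a.im * b.im)))) := by
    rw [hfun3]
    exact (hsq2.const_mul 2).deriv
  have hev3' : (fun t : ℝ => 4 * (curv (fun s => c s + t • h s) θ) ^ ((1 : ℝ) / 4) *
      Real.sqrt (sp (fun s => c s + t • h s) θ))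
      =ᶠ[nhds (0:ℝ)] fun t => 4 * (P t ^ ((1:ℝ)/4) * Q t ^ (-(1:ℝ)/8)) := by
    filter_upwards [hev3] with t ht
    rw [mul_assoc, ht]
  have G3b : deriv (fun t : ℝ => 4 * (curv (fun s => c s + t • h s) θ) ^ ((1 : ℝ) / 4) *
      Real.sqrt (sp (fun s => c s + t • h s) θ)) 0
      = 4 * (((a.re * B.im - a.im * B.re) * u ^ 8
          - (a.re * A.re + a.im * A.im) * (a.re * b.im - a.im * b.re)) / (4 * w ^ 3 * u ^ 9)) := by
    rw [hev3'.deriv_eq, (hg.const_mul 4).deriv, F1, F2, F3, pow_one]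
    have e : (((b.re * A.im + a.re * B.im) - (b.im * A.re + a.im * B.re)) * ((1:ℝ)/4) *
          (w ^ 3)⁻¹) * (u)⁻¹
        + P 0 ^ ((1:ℝ)/4) *
          (2 * (a.re * b.re + a.im * b.im) * (-(1:ℝ)/8) * (u ^ 9)⁻¹)
        = ((a.re * B.im - a.im * B.re) * u ^ 8
          - (a.re * A.re + a.im * A.im) * (a.re * b.im - a.im * b.re)) / (4 * w ^ 3 * u ^ 9) := by
      rw [← hw_def]
      rw [show (((b.re * A.im + a.re * B.im) - (b.im * A.re + a.im * B.re)) * ((1:ℝ)/4) *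
          (w ^ 3)⁻¹) * (u)⁻¹ + w * (2 * (a.re * b.re + a.im * b.im) * (-(1:ℝ)/8) * (u ^ 9)⁻¹)
        = ((b.re * A.im - b.im * A.re + (a.re * B.im - a.im * B.re)) * u ^ 8
          - (a.re * b.re + a.im * b.im) * w ^ 4) / (4 * w ^ 3 * u ^ 9) from by
          field_simp; ring]
      congr 1
      linear_combination hkey
    rw [e]
  rw [G3a, G3b, hdot1, hdot2, F6, hspu, hssqQ0, hsqQ0]
  field_simp
end
end

section
/- Define R⁻¹ : C^∞([0,2π], ℝ_{>0}×ℝ_{>0}) → C^∞([0,2π], ℝ²) by R⁻¹(q)(θ) = 2^{-2}∫₀^θ q₁(σ)² exp(i ∫₀^σ 2^{-6} q₁(τ)^{-2} q₂(τ)⁴ dτ) dσ (identifying ℝ² with ℂ). Then c = R⁻¹(q) is an immersed curve with |c'| = 2^{-2}q₁², curvature κ = (q₂/(2q₁))⁴ > 0, c(0)=0, α(0)=0, and √|c'|·(2, 4κ^{1/4}) = q. In particular R⁻¹ is a two-sided inverse of the R-transform on open strictly convex curves modulo motions. -/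
open Real MeasureTheory Set

noncomputable section

/-- The integrated turning angle of the inverse R-transform. -/
def alphaQ (q₁ q₂ : ℝ → ℝ) (σ : ℝ) : ℝ :=
  ∫ τ in (0 : ℝ)..σ, ((q₁ τ) ^ 2)⁻¹ * (q₂ τ) ^ 4 / 64

/-- The inverse of the R-transform on open convex curves modulo motions. -/
def Rinv (q₁ q₂ : ℝ → ℝ) (θ : ℝ) : ℂ :=
  (4 : ℂ)⁻¹ * ∫ σ in (0 : ℝ)..θ,
    (((q₁ σ) ^ 2 : ℝ) : ℂ) * Complex.exp ((alphaQ q₁ q₂ σ : ℝ) * Complex.I)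

/-- An antiderivative of a `C^ω` function is `C^ω`. -/
theorem contDiff_primitive {E : Type*} [NormedAddCommGroup E] [NormedSpace ℝ E]
    [CompleteSpace E] {g F : ℝ → E} (hg : ContDiff ℝ (⊤ : ℕ∞) g)
    (hF : ∀ x, HasDerivAt F (g x) x) : ContDiff ℝ (⊤ : ℕ∞) F := by
  have htop : ((⊤ : ℕ∞) : WithTop ℕ∞) = ((⊤ : ℕ∞) : WithTop ℕ∞) + 1 := by
    rfl
  rw [htop, contDiff_succ_iff_deriv]
  refine ⟨fun x => (hF x).differentiableAt, fun h => ?_, ?_⟩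
  · exact absurd h (by simp)
  · have hd : deriv F = g := funext fun x => (hF x).deriv
    rw [hd]
    exact hg

/-- R⁻¹ produces an immersed strictly convex curve with the stated
speed, curvature and normalization, and is a right inverse of R(c) = √|c'|(2,4κ^{1/4}). -/
theorem stmt5 (q₁ q₂ : ℝ → ℝ) (hq1 : ContDiff ℝ (⊤ : ℕ∞) q₁) (hq2 : ContDiff ℝ (⊤ : ℕ∞) q₂)
    (hp1 : ∀ θ, 0 < q₁ θ) (hp2 : ∀ θ, 0 < q₂ θ) :
    ContDiff ℝ (⊤ : ℕ∞) (Rinv q₁ q₂) ∧ Rinv q₁ q₂ 0 = 0 ∧ tv (Rinv q₁ q₂) 0 = 1 ∧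
    ∀ θ, deriv (Rinv q₁ q₂) θ ≠ 0 ∧
      sp (Rinv q₁ q₂) θ = (q₁ θ) ^ 2 / 4 ∧
      curv (Rinv q₁ q₂) θ = (q₂ θ / (2 * q₁ θ)) ^ 4 ∧
      0 < curv (Rinv q₁ q₂) θ ∧
      2 * Real.sqrt (sp (Rinv q₁ q₂) θ) = q₁ θ ∧
      4 * (curv (Rinv q₁ q₂) θ) ^ ((1 : ℝ) / 4) * Real.sqrt (sp (Rinv q₁ q₂) θ) = q₂ θ := by
  -- the turning-angle integrand
  set g : ℝ → ℝ := fun τ => ((q₁ τ) ^ 2)⁻¹ * (q₂ τ) ^ 4 / 64 with hgdef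
  have hq1sq_ne : ∀ τ, (q₁ τ) ^ 2 ≠ 0 := fun τ => pow_ne_zero 2 (hp1 τ).ne'
  have hgsmooth : ContDiff ℝ (⊤ : ℕ∞) g :=
    (((hq1.pow 2).inv hq1sq_ne).mul (hq2.pow 4)).div_const 64
  have hgc : Continuous g := hgsmooth.continuous
  have hαderiv : ∀ σ, HasDerivAt (alphaQ q₁ q₂) (g σ) σ := fun σ =>
    (hgc.integral_hasStrictDerivAt 0 σ).hasDerivAt
  have hαsmooth : ContDiff ℝ (⊤ : ℕ∞) (alphaQ q₁ q₂) := contDiff_primitive hgsmooth hαderiv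
  -- the integrand of Rinv
  set Fc : ℝ → ℂ := fun σ =>
    (((q₁ σ) ^ 2 : ℝ) : ℂ) * Complex.exp ((alphaQ q₁ q₂ σ : ℝ) * Complex.I) with hFcdef
  have hofReal : ContDiff ℝ (⊤ : ℕ∞) (fun x : ℝ => (x : ℂ)) :=
    Complex.ofRealCLM.contDiff
  have hFcsmooth : ContDiff ℝ (⊤ : ℕ∞) Fc := by
    apply ContDiff.mul
    · exact hofReal.comp (hq1.pow 2)
    · exact Complex.contDiff_exp.comp ((hofReal.comp hαsmooth).mul contDiff_const)
  have hFccont : Continuous Fc := hFcsmooth.continuous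
  -- derivative of Rinv
  have hRderiv : ∀ θ, HasDerivAt (Rinv q₁ q₂) ((4 : ℂ)⁻¹ * Fc θ) θ := by
    intro θ
    have h := ((hFccont.integral_hasStrictDerivAt 0 θ).hasDerivAt).const_mul (4 : ℂ)⁻¹
    exact h
  have hRderiv_eq : ∀ θ, deriv (Rinv q₁ q₂) θ = (4 : ℂ)⁻¹ * Fc θ := fun θ => (hRderiv θ).deriv
  have hexp_abs : ∀ θ, ‖Complex.exp ((alphaQ q₁ q₂ θ : ℝ) * Complex.I)‖ = 1 :=
    fun θ => Complex.norm_exp_ofReal_mul_I _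
  have hFc_ne : ∀ θ, Fc θ ≠ 0 := by
    intro θ
    apply mul_ne_zero
    · exact_mod_cast hq1sq_ne θ
    · exact Complex.exp_ne_zero _
  -- speed
  have hsp : ∀ θ, sp (Rinv q₁ q₂) θ = (q₁ θ) ^ 2 / 4 := by
    intro θ
    have h1 : (4:ℂ)⁻¹ * Fc θ
        = ((((q₁ θ)^2/4 : ℝ)) : ℂ) * Complex.exp ((alphaQ q₁ q₂ θ : ℝ) * Complex.I) := by
      rw [hFcdef]
      push_cast
      ring
    rw [sp, hRderiv_eq θ, h1, norm_mul, Complex.norm_real, Real.norm_eq_abs, hexp_abs θ, mul_one,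
      abs_of_nonneg (by positivity : (0:ℝ) ≤ (q₁ θ)^2/4)]
  have hsp_pos : ∀ θ, 0 < sp (Rinv q₁ q₂) θ := by
    intro θ; rw [hsp θ]; have := hp1 θ; positivity
  -- tangent vector
  have htv : ∀ θ, tv (Rinv q₁ q₂) θ = Complex.exp ((alphaQ q₁ q₂ θ : ℝ) * Complex.I) := by
    intro θ
    rw [tv, hRderiv_eq, hsp, Complex.real_smul, hFcdef]
    have h4 : ((q₁ θ) ^ 2 / 4 : ℝ) ≠ 0 := by have := hp1 θ; positivity
    push_cast
    have hq : ((q₁ θ : ℂ)) ^ 2 ≠ 0 := by exact_mod_cast hq1sq_ne θ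
    field_simp
    ring_nf
    exact mul_inv_cancel₀ (by exact_mod_cast (hp1 θ).ne')
  -- alphaQ 0 = 0
  have hα0 : alphaQ q₁ q₂ 0 = 0 := intervalIntegral.integral_same
  refine ⟨?_, ?_, ?_, ?_⟩
  · exact contDiff_primitive (contDiff_const.mul hFcsmooth) hRderiv
  · rw [Rinv, intervalIntegral.integral_same, mul_zero]
  · rw [htv 0, hα0]
    simp
  · intro θ
    -- derivative of the tangent
    have htvfun : tv (Rinv q₁ q₂) = fun θ => Complex.exp ((alphaQ q₁ q₂ θ : ℝ) * Complex.I) :=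
      funext htv
    have htvderiv : HasDerivAt (tv (Rinv q₁ q₂))
        (Complex.exp ((alphaQ q₁ q₂ θ : ℝ) * Complex.I) * ((g θ : ℝ) * Complex.I)) θ := by
      rw [htvfun]
      exact (((hαderiv θ).ofReal_comp).mul_const Complex.I).cexp
    set w : ℂ := Complex.exp ((alphaQ q₁ q₂ θ : ℝ) * Complex.I) with hw
    have hDs : Ds (Rinv q₁ q₂) (tv (Rinv q₁ q₂)) θ
        = ((4 / (q₁ θ) ^ 2 * g θ : ℝ) : ℂ) * (Complex.I * w) := by
      rw [Ds, htvderiv.deriv, hsp, Complex.real_smul]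
      have hq : ((q₁ θ : ℂ)) ^ 2 ≠ 0 := by exact_mod_cast hq1sq_ne θ
      push_cast
      field_simp
    have hnv : nv (Rinv q₁ q₂) θ = Complex.I * w := by rw [nv, htv θ]
    have hsq : (Complex.I * w).re ^ 2 + (Complex.I * w).im ^ 2 = 1 := by
      have h1 : Complex.normSq (Complex.I * w) = 1 := by
        rw [← Complex.sq_norm]
        rw [norm_mul, Complex.norm_I, hw, hexp_abs θ]
        norm_num
      rw [← h1, Complex.normSq_apply]
      ring
    have hcurv : curv (Rinv q₁ q₂) θ = 4 / (q₁ θ) ^ 2 * g θ := by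
      rw [curv, hDs, hnv, dotc]
      have hre : ∀ (r : ℝ) (v : ℂ), ((r : ℂ) * v).re = r * v.re := by
        intro r v; simp [Complex.mul_re]
      have him : ∀ (r : ℝ) (v : ℂ), ((r : ℂ) * v).im = r * v.im := by
        intro r v; simp [Complex.mul_im]
      rw [hre, him]
      linear_combination (4 / (q₁ θ) ^ 2 * g θ) * hsq
    have hcurv2 : curv (Rinv q₁ q₂) θ = (q₂ θ / (2 * q₁ θ)) ^ 4 := by
      rw [hcurv, hgdef]
      have h1 : q₁ θ ≠ 0 := (hp1 θ).ne'
      field_simp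
      ring
    have hcurv_pos : 0 < curv (Rinv q₁ q₂) θ := by
      rw [hcurv2]; have := hp1 θ; have := hp2 θ; positivity
    have hsqrt : Real.sqrt (sp (Rinv q₁ q₂) θ) = q₁ θ / 2 := by
      rw [hsp]
      rw [show (q₁ θ) ^ 2 / 4 = (q₁ θ / 2) ^ 2 by ring]
      exact Real.sqrt_sq (by have := hp1 θ; positivity)
    refine ⟨?_, hsp θ, hcurv2, hcurv_pos, ?_, ?_⟩
    · rw [hRderiv_eq]
      exact mul_ne_zero (by norm_num) (hFc_ne θ)
    · rw [hsqrt]; ring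
    · rw [hcurv2, hsqrt]
      have hx : (0 : ℝ) ≤ q₂ θ / (2 * q₁ θ) := by
        have := hp1 θ; have := hp2 θ; positivity
      have h4 : ((q₂ θ / (2 * q₁ θ)) ^ 4) ^ ((1:ℝ)/4) = q₂ θ / (2 * q₁ θ) := by
        rw [← Real.rpow_natCast (q₂ θ / (2 * q₁ θ)) 4, ← Real.rpow_mul hx]
        norm_num
      rw [h4]
      have h1 : q₁ θ ≠ 0 := (hp1 θ).ne'
      field_simp
      ring_nf
end
end

section
/- For fixed 0 < x₀ < x₁, the function f(C) = (2/C⁴)(F(Cx₁) − F(Cx₀)) is strictly increasing on the interval 0 < C ≤ 1/x₁, where F(u) = ∫₀^u z⁶/√(1−z⁶) dz. -/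
open Real Set MeasureTheory

noncomputable section

/-- F(u) = ∫₀ᵘ z⁶/√(1−z⁶) dz. -/
def Fgeo (u : ℝ) : ℝ := ∫ z in (0 : ℝ)..u, z ^ 6 / Real.sqrt (1 - z ^ 6)

/-!
Substituting `z = C t` gives `F(C x₁) − F(C x₀) = C⁷ K(C)` with
`K(C) = ∫_{x₀}^{x₁} t⁶ / √(1 − (C t)⁶) dt`, so the function is `2 C³ K(C)`. On the interval
`C x₁ ≤ 1` the kernel `K` is positive and nondecreasing in `C`, while `C³` is strictly increasing.
The only analytic input is that `z ^ n / √(1 − z ^ n)` is integrable on `[0, 1]`, being dominated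
by `(1 − z) ^ (-1/2)`.
-/

section PowDivSqrt

variable {n : ℕ}

lemma pow_div_sqrt_one_sub_pow_le_rpow (hn : n ≠ 0) {z : ℝ} (hz : z ∈ Icc (0 : ℝ) 1) :
    z ^ n / √(1 - z ^ n) ≤ (1 - z) ^ (-(1 / 2) : ℝ) := by
  obtain ⟨hz0, hz1⟩ := hz
  rcases hz1.lt_or_eq with hz1 | rfl
  · have hpos : 0 < √(1 - z) := Real.sqrt_pos.2 (by linarith)
    calc z ^ n / √(1 - z ^ n) ≤ 1 / √(1 - z) := by
          refine div_le_div₀ zero_le_one (pow_le_one₀ hz0 hz1.le) hpos (Real.sqrt_le_sqrt ?_)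
          linarith [pow_le_of_le_one hz0 hz1.le hn]
      _ = (1 - z) ^ (-(1 / 2) : ℝ) := by
          rw [Real.rpow_neg (by linarith), ← Real.sqrt_eq_rpow, one_div]
  · simp

lemma intervalIntegrable_pow_div_sqrt_one_sub_pow (hn : n ≠ 0) {a b : ℝ}
    (ha : a ∈ Icc (0 : ℝ) 1) (hb : b ∈ Icc (0 : ℝ) 1) :
    IntervalIntegrable (fun z : ℝ => z ^ n / √(1 - z ^ n)) volume a b := by
  have hdom : IntervalIntegrable (fun z : ℝ => (1 - z) ^ (-(1 / 2) : ℝ)) volume 0 1 := by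
    simpa using ((intervalIntegral.intervalIntegrable_rpow' (a := 0) (b := 1)
      (r := -(1 / 2)) (by norm_num)).comp_sub_left 1).symm
  have h01 : IntervalIntegrable (fun z : ℝ => z ^ n / √(1 - z ^ n)) volume 0 1 := by
    refine hdom.mono_fun' (Measurable.aestronglyMeasurable (by fun_prop)) ?_
    rw [uIoc_of_le zero_le_one]
    filter_upwards [ae_restrict_mem measurableSet_Ioc] with z hz
    rw [Real.norm_of_nonneg (div_nonneg (pow_nonneg hz.1.le n) (sqrt_nonneg _))]
    exact pow_div_sqrt_one_sub_pow_le_rpow hn (Ioc_subset_Icc_self hz)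
  refine h01.mono_set (uIcc_subset_uIcc ?_ ?_) <;> rwa [uIcc_of_le zero_le_one]

lemma integral_pow_div_sqrt_one_sub_pow_mul (a b C : ℝ) :
    ∫ z in C * a..C * b, z ^ n / √(1 - z ^ n) =
      C ^ (n + 1) * ∫ t in a..b, t ^ n / √(1 - (C * t) ^ n) := by
  rw [← intervalIntegral.smul_integral_comp_mul_left, smul_eq_mul, pow_succ', mul_assoc,
    ← intervalIntegral.integral_const_mul (C ^ n)]
  congr 1
  refine intervalIntegral.integral_congr fun t _ => ?_
  simp only [mul_pow C t n, mul_div_assoc]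

lemma intervalIntegrable_pow_div_sqrt_one_sub_mul_pow (hn : n ≠ 0) {a b C : ℝ} (hC : 0 < C)
    (ha : 0 ≤ a) (hab : a ≤ b) (hCb : C * b ≤ 1) :
    IntervalIntegrable (fun t : ℝ => t ^ n / √(1 - (C * t) ^ n)) volume a b := by
  have h := ((intervalIntegrable_pow_div_sqrt_one_sub_pow hn
    ⟨mul_nonneg hC.le ha, (mul_le_mul_of_nonneg_left hab hC.le).trans hCb⟩
    ⟨mul_nonneg hC.le (ha.trans hab), hCb⟩).comp_mul_left (c := C)).const_mul (C ^ n)⁻¹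
  rw [mul_div_cancel_left₀ _ hC.ne', mul_div_cancel_left₀ _ hC.ne'] at h
  convert h using 2 with t
  rw [mul_pow C, mul_div_assoc, inv_mul_cancel_left₀ (pow_ne_zero n hC.ne')]

variable {x₀ x₁ : ℝ}

lemma integral_pow_div_sqrt_one_sub_mul_pow_pos (hn : n ≠ 0) (hx₀ : 0 ≤ x₀) (h01 : x₀ < x₁)
    {C : ℝ} (hC : 0 < C) (hCx₁ : C * x₁ < 1) :
    0 < ∫ t in x₀..x₁, t ^ n / √(1 - (C * t) ^ n) := by
  refine intervalIntegral.intervalIntegral_pos_of_pos_on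
    (intervalIntegrable_pow_div_sqrt_one_sub_mul_pow hn hC hx₀ h01.le hCx₁.le)
    (fun t ht => ?_) h01
  have ht0 : 0 < t := hx₀.trans_lt ht.1
  have hCt : (C * t) ^ n < 1 := pow_lt_one₀ (by positivity) (by nlinarith [ht.2]) hn
  exact div_pos (pow_pos ht0 n) (Real.sqrt_pos.2 (by linarith))

lemma integral_pow_div_sqrt_one_sub_mul_pow_mono (hn : n ≠ 0) (hx₀ : 0 ≤ x₀) (h01 : x₀ ≤ x₁)
    {a b : ℝ} (ha : 0 < a) (hab : a ≤ b) (hbx₁ : b * x₁ ≤ 1) :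
    ∫ t in x₀..x₁, t ^ n / √(1 - (a * t) ^ n) ≤
      ∫ t in x₀..x₁, t ^ n / √(1 - (b * t) ^ n) := by
  have hax₁ : a * x₁ ≤ 1 := (mul_le_mul_of_nonneg_right hab (hx₀.trans h01)).trans hbx₁
  refine intervalIntegral.integral_mono_on_of_le_Ioo h01
    (intervalIntegrable_pow_div_sqrt_one_sub_mul_pow hn ha hx₀ h01 hax₁)
    (intervalIntegrable_pow_div_sqrt_one_sub_mul_pow hn (ha.trans_le hab) hx₀ h01 hbx₁)
    (fun t ht => ?_)
  have ht0 : 0 < t := hx₀.trans_lt ht.1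
  have hbt : (b * t) ^ n < 1 := pow_lt_one₀ (mul_pos (ha.trans_le hab) ht0).le (by nlinarith [ht.2]) hn
  have hat : (a * t) ^ n ≤ (b * t) ^ n := by gcongr
  gcongr

end PowDivSqrt

lemma Fgeo_mul_sub_Fgeo_mul {x₀ x₁ C : ℝ} (hx₀ : 0 ≤ x₀) (h01 : x₀ ≤ x₁) (hC : 0 ≤ C)
    (hCx₁ : C * x₁ ≤ 1) :
    Fgeo (C * x₁) - Fgeo (C * x₀) = C ^ 7 * ∫ t in x₀..x₁, t ^ 6 / √(1 - (C * t) ^ 6) := by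
  have hCx₀ : C * x₀ ≤ C * x₁ := mul_le_mul_of_nonneg_left h01 hC
  have hint : ∀ u ∈ Icc (0 : ℝ) 1,
      IntervalIntegrable (fun z : ℝ => z ^ 6 / √(1 - z ^ 6)) volume 0 u :=
    fun _ hu => intervalIntegrable_pow_div_sqrt_one_sub_pow (by norm_num)
      (left_mem_Icc.2 zero_le_one) hu
  rw [Fgeo, Fgeo, intervalIntegral.integral_interval_sub_left
    (hint _ ⟨(mul_nonneg hC hx₀).trans hCx₀, hCx₁⟩)
    (hint _ ⟨mul_nonneg hC hx₀, hCx₀.trans hCx₁⟩), integral_pow_div_sqrt_one_sub_pow_mul]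

/-- for fixed 0 < x₀ < x₁, the function
C ↦ (2/C⁴)(F(Cx₁) − F(Cx₀)) is strictly increasing on (0, 1/x₁]. -/
theorem stmt13 (x₀ x₁ : ℝ) (h0 : 0 < x₀) (h01 : x₀ < x₁) :
    StrictMonoOn (fun C : ℝ => (2 / C ^ 4) * (Fgeo (C * x₁) - Fgeo (C * x₀)))
      (Set.Ioc 0 x₁⁻¹) := by
  have hx₁ : 0 < x₁ := h0.trans h01
  have hCx₁ : ∀ C ∈ Ioc (0 : ℝ) x₁⁻¹, C * x₁ ≤ 1 := fun C hC =>
    (le_div_iff₀ hx₁).1 (by rw [one_div]; exact hC.2)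
  have hf : ∀ C ∈ Ioc (0 : ℝ) x₁⁻¹, (2 / C ^ 4) * (Fgeo (C * x₁) - Fgeo (C * x₀)) =
      2 * (C ^ 3 * ∫ t in x₀..x₁, t ^ 6 / √(1 - (C * t) ^ 6)) := by
    intro C hC
    rw [Fgeo_mul_sub_Fgeo_mul h0.le h01.le hC.1.le (hCx₁ C hC)]
    field_simp [hC.1.ne']
  intro a ha b hb hab
  simp only [hf a ha, hf b hb]
  have hax₁ : a * x₁ < 1 := (mul_lt_mul_of_pos_right hab hx₁).trans_le (hCx₁ b hb)
  refine mul_lt_mul_of_pos_left (mul_lt_mul (pow_lt_pow_left₀ hab ha.1.le (by norm_num))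
    (integral_pow_div_sqrt_one_sub_mul_pow_mono (by norm_num) h0.le h01.le ha.1 hab.le (hCx₁ b hb))
    (integral_pow_div_sqrt_one_sub_mul_pow_pos (by norm_num) h0.le h01 ha.1 hax₁)
    (pow_pos (ha.1.trans hab) 3).le) two_pos
end
end

section
/- Let q = (q₁,q₂,q₃) ∈ C^∞(S¹, ℝ_{>0}×S¹×ℝ) satisfy q₂' = q₁^{-2} q₃ and ∫_{S¹} q₁² exp(i q₂) dθ = 0. Define c(θ) = ∫₀^θ q₁(σ)² exp(i q₂(σ)) dσ (identifying ℝ²≅ℂ). Then c is a smooth closed immersed curve with |c'| = q₁², turning angle α = q₂, and κ|c'|² = q₃; i.e., c is a preimage of q under the R-transform R(c) = (√|c'|, α, κ|c'|²). -/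
open Real MeasureTheory Set

noncomputable section

/-- inverting the R-transform R(c) = (√|c'|, α, κ|c'|²) on closed
curves: if q₂' = q₁⁻²q₃ and ∫ q₁² e^{iq₂} dθ = 0, then
c(θ) = ∫₀^θ q₁² e^{iq₂} dσ is a smooth closed immersed curve with |c'| = q₁²,
turning angle q₂ and κ|c'|² = q₃. -/
theorem stmt18 (q₁ q₂ q₃ : ℝ → ℝ)
    (h1 : ContDiff ℝ (⊤ : ℕ∞) q₁) (h2 : ContDiff ℝ (⊤ : ℕ∞) q₂) (h3 : ContDiff ℝ (⊤ : ℕ∞) q₃)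
    (hper1 : Function.Periodic q₁ (2 * π)) (hper3 : Function.Periodic q₃ (2 * π))
    (hper2 : ∃ m : ℤ, ∀ θ, q₂ (θ + 2 * π) = q₂ θ + 2 * π * m)
    (hpos : ∀ θ, 0 < q₁ θ)
    (hdiff : ∀ θ, deriv q₂ θ = ((q₁ θ) ^ 2)⁻¹ * q₃ θ)
    (hcl : (∫ θ in (0 : ℝ)..(2 * π),
        (((q₁ θ) ^ 2 : ℝ) : ℂ) * Complex.exp ((q₂ θ : ℝ) * Complex.I)) = 0) :
    let c : ℝ → ℂ := fun θ => ∫ σ in (0 : ℝ)..θ,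
        (((q₁ σ) ^ 2 : ℝ) : ℂ) * Complex.exp ((q₂ σ : ℝ) * Complex.I)
    ContDiff ℝ (⊤ : ℕ∞) c ∧ Function.Periodic c (2 * π) ∧
    ∀ θ, deriv c θ ≠ 0 ∧ sp c θ = (q₁ θ) ^ 2 ∧
      deriv c θ = ((sp c θ : ℝ) : ℂ) * Complex.exp ((q₂ θ : ℝ) * Complex.I) ∧
      curv c θ * (sp c θ) ^ 2 = q₃ θ := by
  intro c
  set f : ℝ → ℂ := fun θ => (((q₁ θ) ^ 2 : ℝ) : ℂ) * Complex.exp ((q₂ θ : ℝ) * Complex.I)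
    with hf
  have hfC : ContDiff ℝ (⊤ : ℕ∞) f := by
    apply ContDiff.mul
    · exact (Complex.ofRealCLM.contDiff).comp (h1.pow 2)
    · exact Complex.contDiff_exp.comp
        (((Complex.ofRealCLM.contDiff).comp h2).mul contDiff_const)
  have hfcont : Continuous f := hfC.continuous
  have hderiv : ∀ θ, HasDerivAt c (f θ) θ := fun θ =>
    (hfcont.integral_hasStrictDerivAt 0 θ).hasDerivAt
  have hdc : deriv c = f := funext fun θ => (hderiv θ).deriv
  have hcC : ContDiff ℝ (⊤ : ℕ∞) c := by
    rw [contDiff_infty_iff_deriv]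
    exact ⟨fun x => (hderiv x).differentiableAt, by rw [hdc]; exact hfC⟩
  -- speed
  have hsp : ∀ θ, sp c θ = (q₁ θ) ^ 2 := by
    intro θ
    have : ‖f θ‖ = (q₁ θ) ^ 2 := by
      rw [hf]
      simp [map_mul, Complex.norm_exp_ofReal_mul_I, abs_of_pos (pow_pos (hpos θ) 2)]
    simpa [sp, hdc] using this
  -- periodicity of f
  have hfper : Function.Periodic f (2 * π) := by
    obtain ⟨m, hm⟩ := hper2
    intro θ
    simp only [hf, hper1 θ, hm θ]
    congr 1
    rw [Complex.ofReal_add]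
    rw [add_mul, Complex.exp_add]
    have : Complex.exp ((2 * π * (m : ℝ) : ℝ) * Complex.I) = 1 := by
      push_cast
      rw [show (2 : ℂ) * π * m * Complex.I = m * (2 * π * Complex.I) by ring]
      exact Complex.exp_int_mul_two_pi_mul_I m
    rw [this, mul_one]
  -- closedness
  have hcper : Function.Periodic c (2 * π) := by
    intro θ
    have hint : ∀ a b : ℝ, IntervalIntegrable f volume a b :=
      fun a b => hfcont.intervalIntegrable a b
    have hsplit : (∫ σ in (0:ℝ)..(θ + 2 * π), f σ)
        = (∫ σ in (0:ℝ)..θ, f σ) + ∫ σ in θ..(θ + 2 * π), f σ :=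
      (intervalIntegral.integral_add_adjacent_intervals (hint 0 θ) (hint θ _)).symm
    have hzero : (∫ σ in θ..(θ + 2 * π), f σ) = 0 := by
      rw [hfper.intervalIntegral_add_eq θ 0, zero_add]
      exact hcl
    show (∫ σ in (0:ℝ)..(θ + 2 * π), f σ) = ∫ σ in (0:ℝ)..θ, f σ
    rw [hsplit, hzero, add_zero]
  refine ⟨hcC, hcper, fun θ => ?_⟩
  have hne : deriv c θ ≠ 0 := by
    rw [hdc, hf]
    apply mul_ne_zero
    · exact_mod_cast (pow_pos (hpos θ) 2).ne'
    · exact Complex.exp_ne_zero _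
  have hderiveq : deriv c θ = ((sp c θ : ℝ) : ℂ) * Complex.exp ((q₂ θ : ℝ) * Complex.I) := by
    rw [hdc, hsp θ]
  refine ⟨hne, hsp θ, hderiveq, ?_⟩
  -- curvature
  have htv : tv c = fun θ => Complex.exp ((q₂ θ : ℝ) * Complex.I) := by
    funext σ
    rw [tv, hdc, hf, hsp σ]
    rw [Complex.real_smul]
    rw [← mul_assoc]
    norm_cast
    rw [inv_mul_cancel₀ (pow_pos (hpos σ) 2).ne', Complex.ofReal_one, one_mul]
  have htvD : HasDerivAt (tv c)
      ((((deriv q₂ θ : ℝ) : ℂ) * Complex.I) * Complex.exp ((q₂ θ : ℝ) * Complex.I)) θ := by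
    rw [htv]
    have h2d : HasDerivAt q₂ (deriv q₂ θ) θ :=
      (h2.differentiable (by simp) θ).hasDerivAt
    have h3d : HasDerivAt (fun σ => ((q₂ σ : ℝ) : ℂ) * Complex.I)
        (((deriv q₂ θ : ℝ) : ℂ) * Complex.I) θ := h2d.ofReal_comp.mul_const _
    simpa [mul_comm] using h3d.cexp
  have hdtv : deriv (tv c) θ
      = (((deriv q₂ θ : ℝ) : ℂ) * Complex.I) * Complex.exp ((q₂ θ : ℝ) * Complex.I) :=
    htvD.deriv
  have hnv : nv c θ = Complex.I * Complex.exp ((q₂ θ : ℝ) * Complex.I) := by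
    rw [nv, htv]
  have hq2d : deriv q₂ θ = ((q₁ θ) ^ 2)⁻¹ * q₃ θ := hdiff θ
  rw [curv, Ds, hdtv, hnv, hsp θ, dotc, hq2d]
  have hre : (Complex.exp ((q₂ θ : ℝ) * Complex.I)).re = Real.cos (q₂ θ) := by
    simp [Complex.exp_ofReal_mul_I_re]
  have him : (Complex.exp ((q₂ θ : ℝ) * Complex.I)).im = Real.sin (q₂ θ) := by
    simp [Complex.exp_ofReal_mul_I_im]
  have hpyth := Real.sin_sq_add_cos_sq (q₂ θ)
  have hQ : ((q₁ θ) ^ 2 : ℝ) ≠ 0 := (pow_pos (hpos θ) 2).ne'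
  simp only [Complex.real_smul, Complex.mul_re, Complex.mul_im, Complex.I_re, Complex.I_im,
    Complex.ofReal_re, Complex.ofReal_im, hre, him]
  field_simp
  have hinv : q₁ θ ^ 4 * (q₁ θ)⁻¹ ^ 4 = 1 := by
    rw [← mul_pow, mul_inv_cancel₀ (hpos θ).ne', one_pow]
  linear_combination (q₃ θ * (Real.cos (q₂ θ) ^ 2 + Real.sin (q₂ θ) ^ 2)) * hinv + q₃ θ * hpyth
end
end
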